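/- arXiv:1005.2644 — 3 statements merged into one kernel-verified Lean document; each statement's English description precedes it below -/
import Mathlib

section
/- Let 𝔽_q be a finite field, χ : 𝔽_q → ℂ a nontrivial additive character, P ∈ 𝔽_q[x₁,x₂,x₃] a nonzero homogeneous polynomial of degree k ≥ 1, and H = {x ∈ 𝔽_q³ : P(x) = 0}. If H contains no plane through the origin, then for every m ∈ 𝔽_q³ ∖ {0} one has |Σ_{x∈H} χ(−m·x)| ≤ k·q²/(q − 1); in particular |Ĥ(m)| ≤ k·q²/(q³(q−1)) ≲ q^{−2}. -/
/-!
Since `P` is homogeneous, every nonzero scalar `t` permutes `H`, so the character sum is unchanged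
by the dilation `x ↦ t • x`. Averaging over all `t` and using orthogonality of `χ` gives
`(q - 1) · Σ_{x ∈ H} χ(-m·x) = q · |H ∩ Π_m| - |H|`. Schwartz–Zippel gives `|H| ≤ k q²`, and,
applied to the restriction of `P` to `Π_m` (a nonzero homogeneous form of degree `k` in two
variables, as `Π_m ⊄ H`), also `q · |H ∩ Π_m| ≤ k q²`. Both terms lie in `[0, k q²]`, hence so
does the absolute value of their difference.
-/

open Finset MvPolynomial

namespace MvPolynomial

theorem IsHomogeneous.eval_smul {σ R : Type*} [CommSemiring R] {P : MvPolynomial σ R} {k : ℕ}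
    (hP : P.IsHomogeneous k) (t : R) (x : σ → R) : eval (t • x) P = t ^ k * eval x P := by
  rw [eval_eq, eval_eq, mul_sum]
  refine sum_congr rfl fun d hd => ?_
  have hdeg : ∑ i ∈ d.support, d i = k := by
    rw [← Finsupp.degree_apply, Finsupp.degree_eq_weight_one]
    exact hP (mem_support_iff.mp hd)
  simp only [Pi.smul_apply, smul_eq_mul, mul_pow, prod_mul_distrib, prod_pow_eq_pow_sum, hdeg]
  ring

theorem card_eval_eq_zero_mul_le {R : Type*} [CommRing R] [IsDomain R] [Fintype R]
    [DecidableEq R] {n : ℕ} {P : MvPolynomial (Fin n) R} (hP : P ≠ 0) :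
    #{x | eval x P = 0} * Fintype.card R ≤ P.totalDegree * Fintype.card R ^ n := by
  have hSZ := schwartz_zippel_totalDegree hP univ
  rw [Fintype.piFinset_univ, card_univ, div_le_div_iff₀ (by positivity) (by positivity)] at hSZ
  exact_mod_cast hSZ

section compLinearMap

variable {R σ ι : Type*} [CommRing R] [Fintype ι] [DecidableEq ι]

noncomputable def compLinearMap (P : MvPolynomial σ R) (L : (ι → R) →ₗ[R] σ → R) :
    MvPolynomial ι R :=
  bind₁ (fun i => ∑ j, C (LinearMap.toMatrix' L i j) * X j) P

theorem eval_compLinearMap (P : MvPolynomial σ R) (L : (ι → R) →ₗ[R] σ → R) (y : ι → R) :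
    eval y (P.compLinearMap L) = eval (L y) P := by
  have hL : (fun i => eval y (∑ j, C (LinearMap.toMatrix' L i j) * X j)) = L y := by
    rw [← LinearMap.toMatrix'_mulVec]
    ext i
    simp [Matrix.mulVec, dotProduct, mul_comm]
  rw [← hL]
  exact eval₂Hom_bind₁ _ _ _ _

theorem IsHomogeneous.compLinearMap {P : MvPolynomial σ R} {k : ℕ} (hP : P.IsHomogeneous k)
    (L : (ι → R) →ₗ[R] σ → R) : (P.compLinearMap L).IsHomogeneous k := by
  simpa [MvPolynomial.compLinearMap, ← aeval_eq_bind₁] using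
    hP.aeval _ fun i => IsHomogeneous.sum _ _ _ fun j _ => (isHomogeneous_X R j).C_mul _

end compLinearMap

section Subspace

variable {F σ : Type*} [Field F] [Fintype F] [DecidableEq F] [Fintype σ] [DecidableEq σ]
  {P : MvPolynomial σ F} {k : ℕ}

theorem IsHomogeneous.card_eval_eq_zero_of_mem_mul_le (hP : P.IsHomogeneous k)
    {W : Submodule F (σ → F)} [DecidablePred (· ∈ W)] (hW : ∃ x ∈ W, eval x P ≠ 0) :
    #{x | x ∈ W ∧ eval x P = 0} * Fintype.card F ≤ k * Fintype.card F ^ Module.finrank F W := by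
  set n := Module.finrank F W
  let e : (Fin n → F) ≃ₗ[F] W := LinearEquiv.ofFinrankEq _ _ (by simp [n])
  let L := W.subtype ∘ₗ e.toLinearMap
  have hL : Function.Injective L := W.injective_subtype.comp e.injective
  have hrange : ∀ x, x ∈ W ↔ ∃ y, L y = x := fun x =>
    ⟨fun hx => ⟨e.symm ⟨x, hx⟩, by simp [L]⟩, by rintro ⟨y, rfl⟩; simp [L]⟩
  have hQ : P.compLinearMap L ≠ 0 := by
    obtain ⟨x, hxW, hx⟩ := hW
    obtain ⟨y, rfl⟩ := (hrange x).mp hxW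
    exact fun h => hx (by rw [← eval_compLinearMap, h, map_zero])
  have hcard : #{x | x ∈ W ∧ eval x P = 0} = #{y | eval y (P.compLinearMap L) = 0} := by
    rw [← card_image_of_injective _ hL]
    congr 1
    ext x
    simp only [mem_filter, mem_univ, true_and, mem_image, eval_compLinearMap, hrange]
    constructor
    · rintro ⟨⟨y, rfl⟩, hy⟩; exact ⟨y, hy, rfl⟩
    · rintro ⟨y, hy, rfl⟩; exact ⟨⟨y, rfl⟩, hy⟩
  rw [hcard]
  exact (card_eval_eq_zero_mul_le hQ).trans
    (Nat.mul_le_mul_right _ (hP.compLinearMap L).totalDegree_le)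

theorem IsHomogeneous.card_eval_eq_zero_of_dual_eq_zero_mul_le (hP : P.IsHomogeneous k)
    {f : Module.Dual F (σ → F)} (hf : f ≠ 0) (hfP : ∃ x, f x = 0 ∧ eval x P ≠ 0) :
    #{x | f x = 0 ∧ eval x P = 0} * Fintype.card F ≤
      k * Fintype.card F ^ (Fintype.card σ - 1) := by
  classical
  have hrank : Module.finrank F (LinearMap.ker f) = Fintype.card σ - 1 := by
    have := Module.Dual.finrank_ker_add_one_of_ne_zero hf
    rw [Module.finrank_fintype_fun_eq_card] at this
    omega
  rw [← hrank]
  convert hP.card_eval_eq_zero_of_mem_mul_le (W := LinearMap.ker f) (by simpa using hfP)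
  exact LinearMap.mem_ker.symm

end Subspace

end MvPolynomial

theorem AddChar.card_sub_one_mul_sum_eq_of_smul_mem {F V R : Type*} [Field F] [Fintype F]
    [DecidableEq F] [AddCommGroup V] [Module F V] [CommRing R] [IsDomain R] {ψ : AddChar F R}
    (hψ : ψ.IsPrimitive) (f : Module.Dual F V) {H : Finset V}
    (hH : ∀ t : F, t ≠ 0 → ∀ x ∈ H, t • x ∈ H) :
    ((Fintype.card F : R) - 1) * ∑ x ∈ H, ψ (-f x) =
      Fintype.card F * #{x ∈ H | f x = 0} - #H := by
  set S : F → R := fun t => ∑ x ∈ H, ψ (t * -f x)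
  have hdilate : ∀ t ≠ 0, S t = S 1 := fun t ht =>
    Finset.sum_nbij' (t • ·) (t⁻¹ • ·) (hH t ht) (hH t⁻¹ (inv_ne_zero ht))
      (fun x _ => inv_smul_smul₀ ht x) (fun x _ => smul_inv_smul₀ ht x)
      (fun x _ => by simp [mul_comm t])
  have hsum : ∑ t, S t = Fintype.card F * #{x ∈ H | f x = 0} := by
    simp only [S]
    rw [Finset.sum_comm]
    simp only [AddChar.sum_mulShift _ hψ, neg_eq_zero, Nat.cast_ite, Nat.cast_zero]
    rw [← sum_filter, sum_const, nsmul_eq_mul, mul_comm]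
  have hsplit : ∑ t, S t = #H + ((Fintype.card F : R) - 1) * S 1 := by
    rw [← add_sum_erase _ _ (mem_univ 0), sum_congr rfl fun t ht => hdilate t (ne_of_mem_erase ht),
      sum_const, card_erase_of_mem (mem_univ _), card_univ, nsmul_eq_mul,
      Nat.cast_pred Fintype.card_pos]
    simp [S]
  simpa [S] using (eq_sub_of_add_eq' (hsplit.symm.trans hsum))

theorem Complex.norm_le_div_of_sub_one_mul_eq_sub {S : ℂ} {q a b c : ℕ} (hq : 1 < q)
    (hS : ((q : ℂ) - 1) * S = a - b) (ha : a ≤ c) (hb : b ≤ c) : ‖S‖ ≤ c / (q - 1 : ℝ) := by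
  have hq' : (1 : ℝ) < q := by exact_mod_cast hq
  have hnorm : (q - 1) * ‖S‖ = |(a : ℝ) - b| := by
    have := congrArg norm hS
    rwa [norm_mul, ← ofReal_natCast, ← ofReal_one, ← ofReal_sub, ← ofReal_natCast a,
      ← ofReal_natCast b, ← ofReal_sub, norm_real, norm_real, Real.norm_of_nonneg (by linarith),
      Real.norm_eq_abs] at this
  rw [le_div_iff₀ (by linarith), mul_comm, hnorm]
  simpa using abs_sub_le_of_le_of_le (Nat.cast_nonneg (α := ℝ) a) (Nat.cast_le.mpr ha)
    (Nat.cast_nonneg b) (Nat.cast_le.mpr hb)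

theorem stmt_2_general {F : Type} [Field F] [Fintype F] [DecidableEq F]
    (χ : AddChar F ℂ) (hχ : χ ≠ 1)
    (k : ℕ)
    (P : MvPolynomial (Fin 3) F) (hP : P ≠ 0) (hhom : P.IsHomogeneous k)
    (H : Finset (Fin 3 → F)) (hH : ∀ x, x ∈ H ↔ MvPolynomial.eval x P = 0)
    (hplane : ¬ ∃ m : Fin 3 → F, m ≠ 0 ∧
        (Finset.univ.filter (fun x : Fin 3 → F => ∑ i, m i * x i = 0)) ⊆ H) :
    ∀ m : Fin 3 → F, m ≠ 0 →
      ‖∑ x ∈ H, χ (-(∑ i, m i * x i))‖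
          ≤ (k : ℝ) * (Fintype.card F : ℝ) ^ 2 / ((Fintype.card F : ℝ) - 1)
      ∧ ‖((Fintype.card F : ℂ))⁻¹ ^ 3 * ∑ x ∈ H, χ (-(∑ i, m i * x i))‖
          ≤ (k : ℝ) * (Fintype.card F : ℝ) ^ 2
              / ((Fintype.card F : ℝ) ^ 3 * ((Fintype.card F : ℝ) - 1)) := by
  intro m hm
  set q := Fintype.card F
  let f := dotProductEquiv F (Fin 3) m
  have hH_eq : H = univ.filter fun x => eval x P = 0 := by ext x; simp [hH]
  have hcard : #H * q ≤ k * q ^ 2 * q := by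
    rw [hH_eq, ← hhom.totalDegree hP, mul_assoc, ← pow_succ]
    exact card_eval_eq_zero_mul_le hP
  have hcard_plane : #{x ∈ H | f x = 0} * q ≤ k * q ^ 2 := by
    have hfP : ∃ x, f x = 0 ∧ eval x P ≠ 0 := by
      by_contra! h
      exact hplane ⟨m, hm, fun x hx => (hH x).mpr (h x (by simpa [f, dotProduct] using hx))⟩
    have hf : f ≠ 0 := (dotProductEquiv F (Fin 3)).map_ne_zero_iff.mpr hm
    simpa [hH_eq, filter_filter, and_comm] using
      hhom.card_eval_eq_zero_of_dual_eq_zero_mul_le hf hfP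
  have hcone : ∀ t : F, t ≠ 0 → ∀ x ∈ H, t • x ∈ H := fun t _ x hx => by
    rw [hH] at hx ⊢
    rw [hhom.eval_smul, hx, mul_zero]
  have hS := AddChar.card_sub_one_mul_sum_eq_of_smul_mem (AddChar.IsPrimitive.of_ne_one hχ) f hcone
  have hbound : ‖∑ x ∈ H, χ (-(∑ i, m i * x i))‖ ≤ k * q ^ 2 / (q - 1) := by
    exact_mod_cast Complex.norm_le_div_of_sub_one_mul_eq_sub (a := q * #{x ∈ H | f x = 0})
      (c := k * q ^ 2) Fintype.one_lt_card (by push_cast; exact hS)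
      (by linarith) (Nat.le_of_mul_le_mul_right hcard Fintype.card_pos)
  refine ⟨hbound, ?_⟩
  rw [norm_mul, norm_pow, norm_inv, Complex.norm_natCast, inv_pow, ← div_eq_inv_mul,
    mul_comm ((q : ℝ) ^ 3), ← div_div]
  gcongr

/-- For a nonzero homogeneous polynomial `P` of degree `k ≥ 1` in three variables
over `𝔽_q`, with `H = {P = 0}` containing no plane through the origin, for every `m ≠ 0` one has
`|Σ_{x∈H} χ(−m·x)| ≤ k·q²/(q − 1)`; in particular `|Ĥ(m)| ≤ k·q²/(q³(q−1)) ≲ q^{−2}`. -/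
theorem stmt_2 {F : Type} [Field F] [Fintype F] [DecidableEq F]
    (χ : AddChar F ℂ) (hχ : χ ≠ 1)
    (k : ℕ) (hk : 1 ≤ k)
    (P : MvPolynomial (Fin 3) F) (hP : P ≠ 0) (hhom : P.IsHomogeneous k)
    (H : Finset (Fin 3 → F)) (hH : ∀ x, x ∈ H ↔ MvPolynomial.eval x P = 0)
    (hplane : ¬ ∃ m : Fin 3 → F, m ≠ 0 ∧
        (Finset.univ.filter (fun x : Fin 3 → F => ∑ i, m i * x i = 0)) ⊆ H) :
    ∀ m : Fin 3 → F, m ≠ 0 →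
      ‖∑ x ∈ H, χ (-(∑ i, m i * x i))‖
          ≤ (k : ℝ) * (Fintype.card F : ℝ) ^ 2 / ((Fintype.card F : ℝ) - 1)
      ∧ ‖((Fintype.card F : ℂ))⁻¹ ^ 3 * ∑ x ∈ H, χ (-(∑ i, m i * x i))‖
          ≤ (k : ℝ) * (Fintype.card F : ℝ) ^ 2
              / ((Fintype.card F : ℝ) ^ 3 * ((Fintype.card F : ℝ) - 1)) :=
  stmt_2_general χ hχ k P hP hhom H hH hplane
end

section
/- Let 𝔽_q be a finite field, χ : 𝔽_q → ℂ a nontrivial additive character, P ∈ 𝔽_q[x₁,x₂,x₃] a nonzero homogeneous polynomial of degree k ≥ 1, and H = {x ∈ 𝔽_q³ : P(x) = 0}. Assume H contains no plane through the origin and |H| ≥ c·q² for some c > 0. Then for every m ∈ 𝔽_q³ ∖ {0}, the inverse Fourier transform of the normalized surface measure dσ on H satisfies |(dσ)^∨(m)| = ||H|^{−1} Σ_{x∈H} χ(m·x)| ≤ k/(c(q − 1)) ≲ q^{−1}. -/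
/-!
Since `P` is homogeneous, `H` is stable under nonzero dilations, so the twisted sums
`∑_{x ∈ H} χ (t (m·x))`, `t ≠ 0`, all equal `S = ∑_{x ∈ H} χ (m·x)`. Summing over every `t ∈ 𝔽_q`
and using orthogonality of characters gives `(q - 1) S = q |H ∩ Π_m| - |H|`.
The Schwartz–Zippel lemma, applied to `P` on `𝔽_q³` and to `P` pulled back to the plane `Π_m`
(a nonzero polynomial, as `Π_m ⊄ H`), gives `|H| ≤ k q²` and `|H ∩ Π_m| ≤ k q`;
with `c q² ≤ |H|` this yields `|q |H ∩ Π_m| - |H|| ≤ (k / c) |H|`.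
-/

open MvPolynomial Finset

theorem MvPolynomial.IsHomogeneous.eval_smul_s3 {R σ : Type*} [CommSemiring R]
    {φ : MvPolynomial σ R} {n : ℕ} (hφ : φ.IsHomogeneous n) (t : R) (x : σ → R) :
    eval (t • x) φ = t ^ n * eval x φ := by
  rw [eval_eq, eval_eq, mul_sum]
  refine sum_congr rfl fun d hd => ?_
  simp only [Pi.smul_apply, smul_eq_mul, mul_pow, prod_mul_distrib, prod_pow_eq_pow_sum,
    ← hφ.degree_eq_sum_deg_support hd]
  ring

theorem MvPolynomial.card_filter_eval_eq_zero_le {R : Type*} [CommRing R] [IsDomain R]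
    [Fintype R] [DecidableEq R] {n : ℕ} {p : MvPolynomial (Fin (n + 1)) R} (hp : p ≠ 0) :
    #{x | eval x p = 0} ≤ p.totalDegree * Fintype.card R ^ n := by
  have h := schwartz_zippel_totalDegree hp univ
  rw [Fintype.piFinset_univ, card_univ, div_le_div_iff₀ (by positivity) (by positivity)] at h
  have : (#{x | eval x p = 0} : ℚ≥0) ≤ p.totalDegree * Fintype.card R ^ n := by
    refine le_of_mul_le_mul_right (a := (Fintype.card R : ℚ≥0)) (h.trans_eq ?_) (by positivity)
    ring
  exact_mod_cast this

section CompLinearMap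

variable {R σ ι : Type*} [CommSemiring R] [Fintype ι] [DecidableEq ι]

noncomputable def MvPolynomial.compLinearMap_s3 (P : MvPolynomial σ R)
    (L : (ι → R) →ₗ[R] (σ → R)) : MvPolynomial ι R :=
  bind₁ (fun i => ∑ j, C (L (Pi.single j 1) i) * X j) P

theorem MvPolynomial.eval_compLinearMap_s3 (P : MvPolynomial σ R) (L : (ι → R) →ₗ[R] (σ → R))
    (s : ι → R) : eval s (P.compLinearMap_s3 L) = eval (L s) P := by
  change eval₂Hom _ s (bind₁ _ P) = eval₂Hom _ (L s) P
  rw [eval₂Hom_bind₁]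
  refine congrArg (eval₂Hom (RingHom.id R) · P) ?_
  funext i
  conv_rhs => rw [pi_eq_sum_univ' s, map_sum]
  simp [mul_comm]

theorem MvPolynomial.IsHomogeneous.compLinearMap_s3 {P : MvPolynomial σ R} {k : ℕ}
    (hP : P.IsHomogeneous k) (L : (ι → R) →ₗ[R] (σ → R)) :
    (P.compLinearMap_s3 L).IsHomogeneous k := by
  have h := hP.aeval (fun i => ∑ j, C (L (Pi.single j 1) i) * X j) fun i =>
    IsHomogeneous.sum univ _ 1 fun j _ => isHomogeneous_C_mul_X (L (Pi.single j 1) i) j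
  rwa [one_mul] at h

end CompLinearMap

section FiniteField

variable {F : Type*} [Field F] [Fintype F] [DecidableEq F]

theorem MvPolynomial.IsHomogeneous.card_filter_mem_eval_eq_zero_le {σ : Type*} [Fintype σ]
    [DecidableEq σ] {P : MvPolynomial σ F} {k : ℕ} (hP : P.IsHomogeneous k) {n : ℕ}
    (W : Submodule F (σ → F)) [DecidablePred (· ∈ W)] (hW : Module.finrank F W = n + 1)
    (hW₀ : ∃ x ∈ W, eval x P ≠ 0) :
    #{x | x ∈ W ∧ eval x P = 0} ≤ k * Fintype.card F ^ n := by
  let e : (Fin (n + 1) → F) ≃ₗ[F] W := LinearEquiv.ofFinrankEq _ _ (by simp [hW])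
  let L := W.subtype ∘ₗ e.toLinearMap
  have hL : ∀ x (hx : x ∈ W), L (e.symm ⟨x, hx⟩) = x := fun x hx => by simp [L]
  have hQ : P.compLinearMap_s3 L ≠ 0 := by
    obtain ⟨x, hx, hPx⟩ := hW₀
    intro h
    have := eval_compLinearMap_s3 P L (e.symm ⟨x, hx⟩)
    rw [h, hL, map_zero] at this
    exact hPx this.symm
  calc #{x | x ∈ W ∧ eval x P = 0} ≤ #{s | eval s (P.compLinearMap_s3 L) = 0} := by
        refine card_le_card_of_surjOn L fun x hx => ?_
        simp only [coe_filter, mem_univ, true_and, Set.mem_ofPred_eq] at hx ⊢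
        exact ⟨e.symm ⟨x, hx.1⟩, by simp only [Set.mem_ofPred_eq, eval_compLinearMap_s3, hL, hx.2],
          hL x hx.1⟩
    _ ≤ (P.compLinearMap_s3 L).totalDegree * Fintype.card F ^ n := card_filter_eval_eq_zero_le hQ
    _ ≤ k * Fintype.card F ^ n := by gcongr; exact (hP.compLinearMap_s3 L).totalDegree_le

theorem MvPolynomial.IsHomogeneous.card_filter_dual_eq_zero_eval_eq_zero_le {n k : ℕ}
    {P : MvPolynomial (Fin (n + 2)) F} (hP : P.IsHomogeneous k)
    {f : Module.Dual F (Fin (n + 2) → F)} (hf : f ≠ 0) {a : Fin (n + 2) → F} (ha : f a = 0)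
    (haP : eval a P ≠ 0) :
    #{x | f x = 0 ∧ eval x P = 0} ≤ k * Fintype.card F ^ n := by
  classical
  have hW : Module.finrank F (LinearMap.ker f) = n + 1 := by
    have := Module.Dual.finrank_ker_add_one_of_ne_zero hf
    rw [Module.finrank_fin_fun] at this
    omega
  simpa only [LinearMap.mem_ker] using
    hP.card_filter_mem_eval_eq_zero_le (LinearMap.ker f) hW ⟨a, ha, haP⟩

theorem AddChar.sub_one_mul_sum_eq_of_smul_mem {V : Type*} [AddCommGroup V] [Module F V]
    {χ : AddChar F ℂ} (hχ : χ ≠ 1) (f : Module.Dual F V) {H : Finset V}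
    (hH : ∀ t : F, t ≠ 0 → ∀ x ∈ H, t • x ∈ H) :
    ((Fintype.card F : ℂ) - 1) * ∑ x ∈ H, χ (f x) = Fintype.card F * #{x ∈ H | f x = 0} - #H := by
  have scale : ∀ t : F, t ≠ 0 → ∑ x ∈ H, χ (t * f x) = ∑ x ∈ H, χ (f x) := fun t ht =>
    sum_nbij' (t • ·) (t⁻¹ • ·) (hH t ht) (hH t⁻¹ (inv_ne_zero ht))
      (fun x _ => inv_smul_smul₀ ht x) (fun x _ => smul_inv_smul₀ ht x)
      (fun x _ => by rw [map_smul, smul_eq_mul])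
  have total := calc
    ∑ t : F, ∑ x ∈ H, χ (t * f x)
        = ∑ x ∈ H, ((if f x = 0 then Fintype.card F else 0 : ℕ) : ℂ) := by
      rw [sum_comm]; exact sum_congr rfl fun x _ => sum_mulShift _ (IsPrimitive.of_ne_one hχ)
    _ = Fintype.card F * #{x ∈ H | f x = 0} := by
      rw [← Nat.cast_sum, sum_ite, sum_const_zero, sum_const]; simp [mul_comm]
  rw [← add_sum_erase _ _ (mem_univ 0), sum_congr rfl fun t ht => scale t (ne_of_mem_erase ht),
    sum_const, card_erase_of_mem (mem_univ 0), card_univ] at total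
  simp only [zero_mul, AddChar.map_zero_eq_one, sum_const, nsmul_eq_mul,
    Nat.cast_pred Fintype.card_pos] at total
  linear_combination total

end FiniteField

theorem abs_mul_sub_le_div_mul {q N h k c : ℝ} (hc : 0 < c) (hq : 0 < q) (hN₀ : 0 ≤ N)
    (hN : N ≤ k * q) (hlow : c * q ^ 2 ≤ h) (hup : h ≤ k * q ^ 2) :
    |q * N - h| ≤ k / c * h := by
  have hck : c ≤ k := le_of_mul_le_mul_right (hlow.trans hup) (by positivity)
  have hh : 0 ≤ h := le_trans (by positivity) hlow
  have hkc : k * q ^ 2 ≤ k / c * h := by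
    rw [div_mul_eq_mul_div, le_div_iff₀ hc]; nlinarith
  rw [abs_le]
  constructor
  · nlinarith [(one_le_div hc).mpr hck]
  · nlinarith

theorem norm_inv_mul_le_of_mul_eq {S : ℂ} {q N h k c : ℝ} (hc : 0 < c) (hq : 1 < q)
    (hS : ((q : ℂ) - 1) * S = q * N - h) (hN₀ : 0 ≤ N) (hN : N ≤ k * q)
    (hlow : c * q ^ 2 ≤ h) (hup : h ≤ k * q ^ 2) :
    ‖(h : ℂ)⁻¹ * S‖ ≤ k / (c * (q - 1)) := by
  have hq₁ : 0 < q - 1 := sub_pos.mpr hq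
  have hh : 0 < h := lt_of_lt_of_le (by positivity) hlow
  have hS' : S = ((q * N - h) / (q - 1) : ℝ) := by
    have hq₁' : (q : ℂ) - 1 ≠ 0 := by exact_mod_cast hq₁.ne'
    apply mul_left_cancel₀ hq₁'
    rw [hS]; push_cast; field_simp
  rw [hS', ← Complex.ofReal_inv, ← Complex.ofReal_mul, Complex.norm_real, Real.norm_eq_abs,
    abs_mul, abs_div, abs_inv, abs_of_pos hh, abs_of_pos hq₁]
  calc h⁻¹ * (|q * N - h| / (q - 1)) ≤ h⁻¹ * (k / c * h / (q - 1)) := by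
        gcongr; exact abs_mul_sub_le_div_mul hc (by linarith) hN₀ hN hlow hup
    _ = k / (c * (q - 1)) := by field_simp

theorem stmt_3_general {F : Type} [Field F] [Fintype F] [DecidableEq F]
    (χ : AddChar F ℂ) (hχ : χ ≠ 1)
    (k : ℕ) (c : ℝ) (hc : 0 < c)
    (P : MvPolynomial (Fin 3) F) (hhom : P.IsHomogeneous k)
    (H : Finset (Fin 3 → F)) (hH : ∀ x, x ∈ H ↔ MvPolynomial.eval x P = 0)
    (hplane : ¬ ∃ m : Fin 3 → F, m ≠ 0 ∧
        (Finset.univ.filter (fun x : Fin 3 → F => ∑ i, m i * x i = 0)) ⊆ H)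
    (hsize : c * (Fintype.card F : ℝ) ^ 2 ≤ H.card) :
    ∀ m : Fin 3 → F, m ≠ 0 →
      ‖(H.card : ℂ)⁻¹ * ∑ x ∈ H, χ (∑ i, m i * x i)‖
        ≤ (k : ℝ) / (c * ((Fintype.card F : ℝ) - 1)) := by
  classical
  intro m hm
  let f := dotProductEquiv F (Fin 3) m
  obtain ⟨a, ha, haH⟩ := not_subset.mp fun hsub => hplane ⟨m, hm, hsub⟩
  have haP : eval a P ≠ 0 := fun h => haH ((hH a).2 h)
  have hf : f ≠ 0 := (LinearEquiv.map_ne_zero_iff _).mpr hm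
  have hplaneCard : #{x ∈ H | f x = 0} ≤ k * Fintype.card F ^ 1 := by
    refine (card_le_card fun x hx => ?_).trans
      (hhom.card_filter_dual_eq_zero_eval_eq_zero_le hf (mem_filter.mp ha).2 haP)
    simp only [mem_filter, mem_univ, true_and] at hx ⊢
    exact ⟨hx.2, (hH x).1 hx.1⟩
  have hcard : #H ≤ k * Fintype.card F ^ 2 := by
    refine (card_le_card fun x hx => ?_).trans
      (hhom.card_filter_mem_eval_eq_zero_le ⊤ (by simp) ⟨a, Submodule.mem_top, haP⟩)
    simpa using (hH x).1 hx
  have hsum := AddChar.sub_one_mul_sum_eq_of_smul_mem hχ f (H := H)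
    fun t _ x hx => (hH _).2 (by rw [hhom.eval_smul_s3, (hH x).1 hx, mul_zero])
  refine norm_inv_mul_le_of_mul_eq (N := #{x ∈ H | f x = 0}) hc
    (by exact_mod_cast Fintype.one_lt_card) ?_ (Nat.cast_nonneg _) ?_ hsize ?_
  · exact_mod_cast hsum
  · rw [pow_one] at hplaneCard
    exact_mod_cast hplaneCard
  · exact_mod_cast hcard

/-- For a nonzero homogeneous polynomial `P` of degree `k ≥ 1` in three variables
over `𝔽_q`, with `H = {P = 0}` containing no plane through the origin and `|H| ≥ c·q²`,
for every `m ≠ 0` the inverse Fourier transform of the normalized surface measure satisfies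
`|(dσ)^∨(m)| = | |H|⁻¹ Σ_{x∈H} χ(m·x) | ≤ k/(c(q − 1)) ≲ q^{−1}`. -/
theorem stmt_3 {F : Type} [Field F] [Fintype F] [DecidableEq F]
    (χ : AddChar F ℂ) (hχ : χ ≠ 1)
    (k : ℕ) (hk : 1 ≤ k) (c : ℝ) (hc : 0 < c)
    (P : MvPolynomial (Fin 3) F) (hP : P ≠ 0) (hhom : P.IsHomogeneous k)
    (H : Finset (Fin 3 → F)) (hH : ∀ x, x ∈ H ↔ MvPolynomial.eval x P = 0)
    (hplane : ¬ ∃ m : Fin 3 → F, m ≠ 0 ∧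
        (Finset.univ.filter (fun x : Fin 3 → F => ∑ i, m i * x i = 0)) ⊆ H)
    (hsize : c * (Fintype.card F : ℝ) ^ 2 ≤ H.card) :
    ∀ m : Fin 3 → F, m ≠ 0 →
      ‖(H.card : ℂ)⁻¹ * ∑ x ∈ H, χ (∑ i, m i * x i)‖
        ≤ (k : ℝ) / (c * ((Fintype.card F : ℝ) - 1)) :=
  stmt_3_general χ hχ k c hc P hhom H hH hplane hsize
end

section
/- Let 𝔽_q be a finite field, χ : 𝔽_q → ℂ a nontrivial additive character, d ≥ 2, and P ∈ 𝔽_q[x₁,…,x_d] a polynomial. For t ∈ 𝔽_q let H_t = {x ∈ 𝔽_q^d : P(x) = t}. Suppose that for some A > 0 one has |Σ_{x∈H_t} χ(m·x)| ≤ A·q^{(d−1)/2} for every t ∈ 𝔽_q and every m ∈ 𝔽_q^d ∖ {0}. Then for all sets E, F ⊆ 𝔽_q^d and every t ∈ 𝔽_q, the counting function ν(t) = |{(x,y) ∈ E × F : P(x−y) = t}| satisfies ν(t) ≤ q^{−d} |E| |F| |H_t| + A·q^{(d−1)/2} √(|E||F|). -/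
/-!
Write `Ê(m) = ∑_{x ∈ E} χ(m·x)`. Orthogonality of characters gives the exact count
`q^d ν(t) = ∑_m Ê(m) Ĝ(-m) Ĥ_t(-m)`. The term `m = 0` is `|E| |G| |H_t|`; in the others
`|Ĥ_t(-m)|` is bounded by the decay hypothesis, and what remains, `∑_m |Ê(m)| |Ĝ(m)|`, is at most
`q^d √(|E| |G|)` by Cauchy–Schwarz and Plancherel `∑_m |Ê(m)|² = q^d |E|`.
-/

open Finset Matrix ComplexConjugate

section FourierCounting

variable {F ι : Type*} [Field F] [Fintype ι] (χ : AddChar F ℂ)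

def expSum (E : Finset (ι → F)) (m : ι → F) : ℂ := ∑ x ∈ E, χ (m ⬝ᵥ x)

lemma addChar_dotProduct_mul_neg (m x y : ι → F) :
    χ (m ⬝ᵥ x) * χ (-m ⬝ᵥ y) = χ (m ⬝ᵥ (x - y)) := by
  rw [← AddChar.map_add_eq_mul, neg_dotProduct, dotProduct_sub, sub_eq_add_neg]

lemma expSum_zero (E : Finset (ι → F)) : expSum χ E 0 = #E := by
  simp [expSum]

variable [Fintype F]

lemma expSum_neg (E : Finset (ι → F)) (m : ι → F) :
    expSum χ E (-m) = conj (expSum χ E m) := by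
  simp [expSum, AddChar.map_neg_eq_conj]

lemma norm_expSum_neg (E : Finset (ι → F)) (m : ι → F) :
    ‖expSum χ E (-m)‖ = ‖expSum χ E m‖ := by
  rw [expSum_neg, Complex.norm_conj]

variable [DecidableEq ι] {χ}

lemma sum_addChar_dotProduct_of_ne_zero (hχ : χ ≠ 1) {w : ι → F} (hw : w ≠ 0) :
    ∑ m : ι → F, χ (m ⬝ᵥ w) = 0 := by
  obtain ⟨a, ha⟩ := AddChar.ne_one_iff.1 hχ
  obtain ⟨i, hi⟩ := Function.ne_iff.1 hw
  have hv : Pi.single i (a / w i) ⬝ᵥ w = a := by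
    rw [single_dotProduct, div_mul_cancel₀ _ hi]
  refine eq_zero_of_mul_eq_self_left ha ?_
  rw [mul_sum]
  refine Fintype.sum_equiv (Equiv.addLeft (Pi.single i (a / w i))) _ _ fun m ↦ ?_
  rw [Equiv.coe_addLeft, add_dotProduct, hv, AddChar.map_add_eq_mul]

variable [DecidableEq F]

lemma sum_addChar_dotProduct (hχ : χ ≠ 1) (w : ι → F) :
    ∑ m : ι → F, χ (m ⬝ᵥ w) =
      if w = 0 then (Fintype.card F : ℂ) ^ Fintype.card ι else 0 := by
  split_ifs with hw
  · simp [hw, Finset.card_univ]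
  · exact sum_addChar_dotProduct_of_ne_zero hχ hw

lemma sum_addChar_dotProduct_mul_expSum_neg (hχ : χ ≠ 1) (H : Finset (ι → F))
    (w : ι → F) :
    ∑ m, χ (m ⬝ᵥ w) * expSum χ H (-m) =
      if w ∈ H then (Fintype.card F : ℂ) ^ Fintype.card ι else 0 := by
  simp only [expSum, mul_sum, addChar_dotProduct_mul_neg]
  rw [sum_comm]
  simp only [sum_addChar_dotProduct hχ, sub_eq_zero]
  rw [sum_ite_eq]

lemma sum_norm_expSum_sq (hχ : χ ≠ 1) (E : Finset (ι → F)) :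
    ∑ m, ‖expSum χ E m‖ ^ 2 = (Fintype.card F : ℝ) ^ Fintype.card ι * #E := by
  have hsq (m : ι → F) :
      ((‖expSum χ E m‖ ^ 2 : ℝ) : ℂ) = ∑ x ∈ E, χ (m ⬝ᵥ x) * expSum χ E (-m) := by
    rw [← sum_mul, ← expSum, expSum_neg, Complex.mul_conj, Complex.normSq_eq_norm_sq]
  apply Complex.ofReal_injective
  push_cast [hsq]
  rw [sum_comm]
  simp only [sum_addChar_dotProduct_mul_expSum_neg hχ]
  rw [sum_ite_of_true fun _ h ↦ h, sum_const, nsmul_eq_mul, mul_comm]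

lemma sum_norm_expSum_mul_le (hχ : χ ≠ 1) (E G : Finset (ι → F)) :
    ∑ m, ‖expSum χ E m‖ * ‖expSum χ G m‖ ≤
      (Fintype.card F : ℝ) ^ Fintype.card ι * √(#E * #G) := by
  refine (Real.sum_mul_le_sqrt_mul_sqrt _ _ _).trans_eq ?_
  rw [sum_norm_expSum_sq hχ, sum_norm_expSum_sq hχ, ← Real.sqrt_mul (by positivity),
    mul_mul_mul_comm, Real.sqrt_mul (by positivity), Real.sqrt_mul_self (by positivity)]

lemma card_filter_sub_mem_mul_eq (hχ : χ ≠ 1) (E G H : Finset (ι → F)) :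
    (#{p ∈ E ×ˢ G | p.1 - p.2 ∈ H} : ℂ) * (Fintype.card F : ℂ) ^ Fintype.card ι =
      ∑ m, expSum χ E m * expSum χ G (-m) * expSum χ H (-m) := by
  calc _ = ∑ p ∈ E ×ˢ G,
        if p.1 - p.2 ∈ H then (Fintype.card F : ℂ) ^ Fintype.card ι else 0 := by
        rw [sum_ite, sum_const_zero, add_zero, sum_const, nsmul_eq_mul]
    _ = ∑ x ∈ E, ∑ y ∈ G, ∑ m, χ (m ⬝ᵥ (x - y)) * expSum χ H (-m) := by
        rw [sum_product]
        simp only [sum_addChar_dotProduct_mul_expSum_neg hχ]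
    _ = ∑ m, ∑ x ∈ E, ∑ y ∈ G, χ (m ⬝ᵥ x) * χ (-m ⬝ᵥ y) * expSum χ H (-m) := by
        symm
        rw [sum_comm]
        refine sum_congr rfl fun x _ ↦ ?_
        rw [sum_comm]
        simp only [addChar_dotProduct_mul_neg]
    _ = _ := by
        refine sum_congr rfl fun m _ ↦ ?_
        simp only [expSum]
        rw [sum_mul_sum]
        simp only [sum_mul]

lemma norm_sum_erase_zero_expSum_mul_le (hχ : χ ≠ 1) (E G H : Finset (ι → F)) {B : ℝ}
    (hB : 0 ≤ B) (hH : ∀ m, m ≠ 0 → ‖expSum χ H m‖ ≤ B) :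
    ‖∑ m ∈ univ.erase 0, expSum χ E m * expSum χ G (-m) * expSum χ H (-m)‖ ≤
      B * ((Fintype.card F : ℝ) ^ Fintype.card ι * √(#E * #G)) := by
  calc _ ≤ ∑ m ∈ univ.erase 0, ‖expSum χ E m‖ * ‖expSum χ G m‖ * B := by
        refine (norm_sum_le _ _).trans (sum_le_sum fun m hm ↦ ?_)
        rw [norm_mul, norm_mul, norm_expSum_neg]
        gcongr
        exact hH _ (neg_ne_zero.2 (ne_of_mem_erase hm))
    _ ≤ ∑ m, ‖expSum χ E m‖ * ‖expSum χ G m‖ * B :=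
        sum_le_sum_of_subset_of_nonneg (subset_univ _) fun _ _ _ ↦ by positivity
    _ = B * ∑ m, ‖expSum χ E m‖ * ‖expSum χ G m‖ := by rw [← sum_mul, mul_comm]
    _ ≤ _ := mul_le_mul_of_nonneg_left (sum_norm_expSum_mul_le hχ E G) hB

lemma card_filter_sub_mem_le (hχ : χ ≠ 1) (E G H : Finset (ι → F)) {B : ℝ} (hB : 0 ≤ B)
    (hH : ∀ m, m ≠ 0 → ‖expSum χ H m‖ ≤ B) :
    (#{p ∈ E ×ˢ G | p.1 - p.2 ∈ H} : ℝ) ≤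
      (Fintype.card F : ℝ)⁻¹ ^ Fintype.card ι * #E * #G * #H + B * √(#E * #G) := by
  set Q : ℝ := (Fintype.card F : ℝ) ^ Fintype.card ι
  have hQ : 0 < Q := by positivity
  set err := ∑ m ∈ univ.erase 0, expSum χ E m * expSum χ G (-m) * expSum χ H (-m)
  have hcount : (#{p ∈ E ×ˢ G | p.1 - p.2 ∈ H} : ℝ) * Q = #E * #G * #H + err.re := by
    have h := card_filter_sub_mem_mul_eq hχ E G H
    rw [← add_sum_erase _ _ (mem_univ 0), neg_zero, expSum_zero, expSum_zero, expSum_zero] at h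
    have h' : (((#{p ∈ E ×ˢ G | p.1 - p.2 ∈ H} : ℝ) * Q : ℝ) : ℂ) =
        ((#E * #G * #H : ℝ) : ℂ) + err := by
      push_cast [Q]
      exact h
    simpa only [Complex.add_re, Complex.ofReal_re] using congrArg Complex.re h'
  have herr : err.re ≤ B * (Q * √(#E * #G)) :=
    (Complex.re_le_norm _).trans (norm_sum_erase_zero_expSum_mul_le hχ E G H hB hH)
  calc (#{p ∈ E ×ˢ G | p.1 - p.2 ∈ H} : ℝ)
        ≤ (#E * #G * #H + B * (Q * √(#E * #G))) / Q := by
        rw [le_div_iff₀ hQ]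
        linarith
    _ = _ := by
        simp only [Q, inv_pow]
        field_simp

end FourierCounting

theorem stmt_10_general {F : Type} [Field F] [Fintype F] [DecidableEq F]
    (χ : AddChar F ℂ) (hχ : χ ≠ 1) (d : ℕ)
    (P : MvPolynomial (Fin d) F) (A : ℝ) (hA : 0 < A)
    (Ht : F → Finset (Fin d → F))
    (hHt : ∀ t x, x ∈ Ht t ↔ MvPolynomial.eval x P = t)
    (hdecay : ∀ t : F, ∀ m : Fin d → F, m ≠ 0 →
      ‖∑ x ∈ Ht t, χ (∑ i, m i * x i)‖
        ≤ A * (Fintype.card F : ℝ) ^ (((d : ℝ) - 1) / 2))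
    (E G : Finset (Fin d → F)) :
    ∀ t : F,
      ((((E ×ˢ G).filter (fun p => MvPolynomial.eval (p.1 - p.2) P = t)).card : ℝ)
        ≤ ((Fintype.card F : ℝ))⁻¹ ^ d * E.card * G.card * (Ht t).card
          + A * (Fintype.card F : ℝ) ^ (((d : ℝ) - 1) / 2)
              * Real.sqrt ((E.card : ℝ) * G.card)) := by
  intro t
  have hlevel : (E ×ˢ G).filter (fun p => MvPolynomial.eval (p.1 - p.2) P = t) =
      {p ∈ E ×ˢ G | p.1 - p.2 ∈ Ht t} := by
    simp only [hHt]
  rw [hlevel]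
  simpa only [Fintype.card_fin] using
    card_filter_sub_mem_le hχ E G (Ht t) (by positivity) (hdecay t)

/-- Let `P ∈ 𝔽_q[x₁,…,x_d]`, `d ≥ 2`, and `H_t = {x : P(x) = t}`.  If for some
`A > 0` one has `|Σ_{x∈H_t} χ(m·x)| ≤ A·q^{(d−1)/2}` for every `t` and every `m ≠ 0`, then for
all `E, F ⊆ 𝔽_q^d` and every `t`, the counting function
`ν(t) = |{(x,y) ∈ E × F : P(x−y) = t}|` satisfies
`ν(t) ≤ q^{−d}·|E|·|F|·|H_t| + A·q^{(d−1)/2}·√(|E||F|)`. -/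
theorem stmt_10 {F : Type} [Field F] [Fintype F] [DecidableEq F]
    (χ : AddChar F ℂ) (hχ : χ ≠ 1) (d : ℕ) (hd : 2 ≤ d)
    (P : MvPolynomial (Fin d) F) (A : ℝ) (hA : 0 < A)
    (Ht : F → Finset (Fin d → F))
    (hHt : ∀ t x, x ∈ Ht t ↔ MvPolynomial.eval x P = t)
    (hdecay : ∀ t : F, ∀ m : Fin d → F, m ≠ 0 →
      ‖∑ x ∈ Ht t, χ (∑ i, m i * x i)‖
        ≤ A * (Fintype.card F : ℝ) ^ (((d : ℝ) - 1) / 2))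
    (E G : Finset (Fin d → F)) :
    ∀ t : F,
      ((((E ×ˢ G).filter (fun p => MvPolynomial.eval (p.1 - p.2) P = t)).card : ℝ)
        ≤ ((Fintype.card F : ℝ))⁻¹ ^ d * E.card * G.card * (Ht t).card
          + A * (Fintype.card F : ℝ) ^ (((d : ℝ) - 1) / 2)
              * Real.sqrt ((E.card : ℝ) * G.card)) :=
  stmt_10_general χ hχ d P A hA Ht hHt hdecay E G
end
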